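/- arXiv:1410.0136 — 3 statements merged into one kernel-verified Lean document; each statement's English description precedes it below -/
import Mathlib

section
/- Suppose u ∈ K satisfies α·⟪u, v − u⟫_U + ⟪S u − d, S(v − u)⟫_Y ≥ 0 for all v ∈ K, and U ∈ K satisfies α·⟪U, v − U⟫_U + ⟪S_h U − d, S_h(v − U)⟫_Y ≥ 0 for all v ∈ K. Then α·‖u − U‖²_U + ‖S u − S_h U‖²_Y ≤ ⟪S u − d, (S − S_h)(U − u)⟫_Y + ⟪S u − S_h U, (S − S_h)u⟫_Y. (This is the abstract error mechanism behind Theorem 4.3 for the variational discretization, in which the admissible set is not discretized; it reduces the L² error of the control and state to consistency errors (S − S_h) of the discrete solution operator.) -/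
open scoped RealInnerProductSpace

/-- Abstract error mechanism for the variational discretization: if `u ∈ K` solves the
continuous variational inequality and `U' ∈ K` solves the discrete one (with discrete
solution operator `Sₕ` but undiscretized admissible set `K`), then
`α‖u - U'‖² + ‖S u - Sₕ U'‖² ≤ ⟪S u - d, (S - Sₕ)(U' - u)⟫ + ⟪S u - Sₕ U', (S - Sₕ) u⟫`. -/
theorem variational_discretization_error_bound
    {U Y : Type*} [NormedAddCommGroup U] [InnerProductSpace ℝ U] [CompleteSpace U]
    [NormedAddCommGroup Y] [InnerProductSpace ℝ Y] [CompleteSpace Y]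
    (S Sₕ : U →L[ℝ] Y) (d : Y) (α : ℝ) (hα : 0 < α)
    (K : Set U) (hK_ne : K.Nonempty) (hK_closed : IsClosed K) (hK_convex : Convex ℝ K)
    (u : U) (hu : u ∈ K)
    (hVI : ∀ v ∈ K, α * ⟪u, v - u⟫ + ⟪S u - d, S (v - u)⟫ ≥ 0)
    (U' : U) (hU' : U' ∈ K)
    (hVIh : ∀ v ∈ K, α * ⟪U', v - U'⟫ + ⟪Sₕ U' - d, Sₕ (v - U')⟫ ≥ 0) :
    α * ‖u - U'‖ ^ 2 + ‖S u - Sₕ U'‖ ^ 2 ≤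
      ⟪S u - d, (S - Sₕ) (U' - u)⟫ + ⟪S u - Sₕ U', (S - Sₕ) u⟫ := by
  have h1 := hVI U' hU'
  have h2 := hVIh u hu
  have e1 : ‖u - U'‖ ^ 2 = ⟪u, u⟫ - ⟪u, U'⟫ - ⟪U', u⟫ + ⟪U', U'⟫ := by
    rw [← real_inner_self_eq_norm_sq]
    simp only [inner_sub_left, inner_sub_right]; ring
  have e2 : ‖S u - Sₕ U'‖ ^ 2 = ⟪S u, S u⟫ - ⟪S u, Sₕ U'⟫ - ⟪Sₕ U', S u⟫ + ⟪Sₕ U', Sₕ U'⟫ := by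
    rw [← real_inner_self_eq_norm_sq]
    simp only [inner_sub_left, inner_sub_right]; ring
  have c1 : ⟪u, U'⟫ = ⟪U', u⟫ := real_inner_comm _ _
  have c2 : ⟪S u, Sₕ U'⟫ = ⟪Sₕ U', S u⟫ := real_inner_comm _ _
  have c3 : ⟪S u, Sₕ u⟫ = ⟪Sₕ u, S u⟫ := real_inner_comm _ _
  have c4 : ⟪Sₕ U', Sₕ u⟫ = ⟪Sₕ u, Sₕ U'⟫ := real_inner_comm _ _
  have c5 : ⟪d, S u⟫ = ⟪S u, d⟫ := real_inner_comm _ _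
  have c6 : ⟪d, Sₕ u⟫ = ⟪Sₕ u, d⟫ := real_inner_comm _ _
  have c7 : ⟪d, S U'⟫ = ⟪S U', d⟫ := real_inner_comm _ _
  have c8 : ⟪d, Sₕ U'⟫ = ⟪Sₕ U', d⟫ := real_inner_comm _ _
  simp only [map_sub, ContinuousLinearMap.sub_apply, inner_sub_left, inner_sub_right] at h1 h2 ⊢
  rw [e1, e2]
  nlinarith [h1, h2]
end

section
/- Assume ⟪e_i − e_{i−1}, w⟫ + k·a(e_i, w) = −k·a(b_i, w) for all w ∈ W and all i = 1, …, N. Then Σ_{i=1}^{N} ( ‖e_i − e_{i−1}‖² + k·a(e_i, e_i) ) + ‖e_N‖² ≤ Σ_{i=1}^{N} k·a(b_i, b_i). (This is the abstract form of estimate (3.18) in the proof of the stability Lemma 3.2 for the fully discrete dG(0)–cG(1) scheme.) -/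
open scoped RealInnerProductSpace

lemma telescope_Icc {f : ℕ → ℝ} (N : ℕ) :
    ∑ i ∈ Finset.Icc 1 N, (f i - f (i - 1)) = f N - f 0 := by
  induction N with
  | zero => simp
  | succ n ih =>
      rw [Finset.sum_Icc_succ_top (by omega : 1 ≤ n + 1), ih]
      simp

/-- Abstract stability estimate (3.18) for the dG(0)–cG(1) scheme: if
`⟪eᵢ - eᵢ₋₁, w⟫ + k·a(eᵢ, w) = -k·a(bᵢ, w)` for all `w ∈ W` and `i = 1, …, N`, with
`a` symmetric positive semidefinite, `e₀ = 0` and `eᵢ ∈ W`, then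
`Σ (‖eᵢ - eᵢ₋₁‖² + k·a(eᵢ,eᵢ)) + ‖e_N‖² ≤ Σ k·a(bᵢ,bᵢ)`. -/
theorem dG0_stability_boundary_part
    {H : Type*} [NormedAddCommGroup H] [InnerProductSpace ℝ H]
    (a : H →ₗ[ℝ] H →ₗ[ℝ] ℝ)
    (ha_symm : ∀ x y : H, a x y = a y x)
    (ha_pos : ∀ v : H, 0 ≤ a v v)
    (W : Submodule ℝ H) (k : ℝ) (hk : 0 < k) (N : ℕ) (hN : 1 ≤ N)
    (e : ℕ → H) (he_mem : ∀ i ≤ N, e i ∈ W) (he0 : e 0 = 0)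
    (b : ℕ → H)
    (hscheme : ∀ i ∈ Finset.Icc 1 N, ∀ w ∈ W,
      ⟪e i - e (i - 1), w⟫ + k * a (e i) w = -(k * a (b i) w)) :
    (∑ i ∈ Finset.Icc 1 N, (‖e i - e (i - 1)‖ ^ 2 + k * a (e i) (e i))) + ‖e N‖ ^ 2 ≤
      ∑ i ∈ Finset.Icc 1 N, k * a (b i) (b i) := by
  have key : ∀ i ∈ Finset.Icc 1 N,
      (‖e i - e (i - 1)‖ ^ 2 + k * a (e i) (e i)) + (‖e i‖ ^ 2 - ‖e (i - 1)‖ ^ 2)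
        ≤ k * a (b i) (b i) := by
    intro i hi
    have hiN : i ≤ N := (Finset.mem_Icc.mp hi).2
    have hsch := hscheme i hi (e i) (he_mem i hiN)
    -- inner product identity
    have hnorm : ‖e i - e (i - 1)‖ ^ 2 =
        ‖e i‖ ^ 2 - 2 * ⟪e i, e (i - 1)⟫ + ‖e (i - 1)‖ ^ 2 := by
      rw [@norm_sub_sq_real]
    have hinner : ⟪e i - e (i - 1), e i⟫ = ‖e i‖ ^ 2 - ⟪e i, e (i - 1)⟫ := by
      rw [inner_sub_left, real_inner_self_eq_norm_sq, real_inner_comm]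
    -- PSD Cauchy-Schwarz style bound
    have hpsd := ha_pos (b i + e i)
    have hexp : a (b i + e i) (b i + e i)
        = a (b i) (b i) + 2 * a (b i) (e i) + a (e i) (e i) := by
      simp [map_add, LinearMap.add_apply, ha_symm (e i) (b i)]
      ring
    rw [hexp] at hpsd
    rw [hinner] at hsch
    nlinarith [hsch, hpsd, hk.le]
  have hsum := Finset.sum_le_sum key
  rw [Finset.sum_add_distrib, telescope_Icc N, he0] at hsum
  simpa using hsum
end

section
/- Assume ⟪y_i − y_{i−1}, w⟫ + k·a(y_i, w) = k·⟪f_i, w⟫ for all w ∈ W and all i = 1, …, N. Then Σ_{i=1}^{N} ( ‖y_i − y_{i−1}‖² + k·a(y_i, y_i) ) + ‖y_N‖² ≤ ‖y₀‖² + (1/c)·Σ_{i=1}^{N} k·‖f_i‖². (This is the abstract form of the stability estimate (5.21) for the dG(0) scheme applied to the homogeneous-Dirichlet part of the state equation in the proof of Lemma 3.2.) -/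
/-!
Testing the i-th equation with `w = yᵢ` and using `2⟪yᵢ - yᵢ₋₁, yᵢ⟫ = ‖yᵢ - yᵢ₋₁‖² + ‖yᵢ‖² - ‖yᵢ₋₁‖²`
turns it into an energy identity. Cauchy–Schwarz and Young's inequality with weight `c` bound
the right-hand side by `k c⁻¹ ‖fᵢ‖² + k c ‖yᵢ‖²`, and coercivity absorbs the last term into
`k a(yᵢ, yᵢ)`. Summing over `i`, the terms `‖yᵢ₋₁‖² - ‖yᵢ‖²` telescope to `‖y₀‖² - ‖y_N‖²`.
-/

open scoped RealInnerProductSpace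
open Finset

theorem Finset.sum_Icc_one_sub_pred {M : Type*} [AddCommGroup M] (u : ℕ → M) (n : ℕ) :
    ∑ i ∈ Icc 1 n, (u (i - 1) - u i) = u 0 - u n := by
  rw [← Finset.Ico_add_one_right_eq_Icc, sum_Ico_eq_sum_range]
  simpa [add_comm 1] using sum_range_sub' u n

theorem dG0_step_energy_le {H : Type*} [NormedAddCommGroup H] [InnerProductSpace ℝ H]
    {x x' g : H} {A c k : ℝ} (hc : 0 < c) (hk : 0 ≤ k) (hA : c * ‖x‖ ^ 2 ≤ A)
    (h : ⟪x - x', x⟫ + k * A = k * ⟪g, x⟫) :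
    ‖x - x'‖ ^ 2 + k * A ≤ c⁻¹ * (k * ‖g‖ ^ 2) + (‖x'‖ ^ 2 - ‖x‖ ^ 2) := by
  have polar : 2 * ⟪x - x', x⟫ = ‖x - x'‖ ^ 2 + ‖x‖ ^ 2 - ‖x'‖ ^ 2 := by
    rw [norm_sub_sq_real, inner_sub_left, real_inner_self_eq_norm_sq, real_inner_comm]
    ring
  have young : 2 * ⟪g, x⟫ ≤ c * ‖x‖ ^ 2 + c⁻¹ * ‖g‖ ^ 2 :=
    calc 2 * ⟪g, x⟫ ≤ 2 * ‖x‖ * ‖g‖ := by linarith [real_inner_le_norm g x, mul_comm ‖g‖ ‖x‖]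
      _ ≤ c * ‖x‖ ^ 2 + c⁻¹ * ‖g‖ ^ 2 := two_mul_le_add_mul_sq hc
  linarith [mul_le_mul_of_nonneg_left young hk, mul_le_mul_of_nonneg_left hA hk]

theorem dG0_stability_interior_part_general
    {H : Type*} [NormedAddCommGroup H] [InnerProductSpace ℝ H]
    (a : H →ₗ[ℝ] H →ₗ[ℝ] ℝ)
    (W : Submodule ℝ H) (c : ℝ) (hc : 0 < c)
    (ha_coercive : ∀ v ∈ W, c * ‖v‖ ^ 2 ≤ a v v)
    (k : ℝ) (hk : 0 < k) (N : ℕ)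
    (y : ℕ → H) (hy_mem : ∀ i, 1 ≤ i → i ≤ N → y i ∈ W)
    (f : ℕ → H)
    (hscheme : ∀ i ∈ Finset.Icc 1 N, ∀ w ∈ W,
      ⟪y i - y (i - 1), w⟫ + k * a (y i) w = k * ⟪f i, w⟫) :
    (∑ i ∈ Finset.Icc 1 N, (‖y i - y (i - 1)‖ ^ 2 + k * a (y i) (y i))) + ‖y N‖ ^ 2 ≤
      ‖y 0‖ ^ 2 + (1 / c) * ∑ i ∈ Finset.Icc 1 N, k * ‖f i‖ ^ 2 := by
  have step : ∀ i ∈ Icc 1 N, ‖y i - y (i - 1)‖ ^ 2 + k * a (y i) (y i) ≤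
      c⁻¹ * (k * ‖f i‖ ^ 2) + (‖y (i - 1)‖ ^ 2 - ‖y i‖ ^ 2) := fun i hi ↦ by
    have hyi : y i ∈ W := hy_mem i (mem_Icc.1 hi).1 (mem_Icc.1 hi).2
    exact dG0_step_energy_le hc hk.le (ha_coercive _ hyi) (hscheme i hi _ hyi)
  calc (∑ i ∈ Icc 1 N, (‖y i - y (i - 1)‖ ^ 2 + k * a (y i) (y i))) + ‖y N‖ ^ 2
      ≤ (∑ i ∈ Icc 1 N, (c⁻¹ * (k * ‖f i‖ ^ 2) + (‖y (i - 1)‖ ^ 2 - ‖y i‖ ^ 2))) + ‖y N‖ ^ 2 :=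
        add_le_add_left (sum_le_sum step) _
    _ = ‖y 0‖ ^ 2 + (1 / c) * ∑ i ∈ Icc 1 N, k * ‖f i‖ ^ 2 := by
        rw [sum_add_distrib, sum_Icc_one_sub_pred (fun i ↦ ‖y i‖ ^ 2), ← mul_sum, one_div]
        ring

/-- Abstract stability estimate (5.21) for the dG(0) scheme applied to the
homogeneous-Dirichlet part of the state equation: if
`⟪yᵢ - yᵢ₋₁, w⟫ + k·a(yᵢ, w) = k·⟪fᵢ, w⟫` for all `w ∈ W` and `i = 1, …, N`, with
`a` symmetric and coercive on `W` with constant `c > 0`, and `yᵢ ∈ W` for `i ≥ 1`, then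
`Σ (‖yᵢ - yᵢ₋₁‖² + k·a(yᵢ,yᵢ)) + ‖y_N‖² ≤ ‖y₀‖² + (1/c)·Σ k‖fᵢ‖²`. -/
theorem dG0_stability_interior_part
    {H : Type*} [NormedAddCommGroup H] [InnerProductSpace ℝ H]
    (a : H →ₗ[ℝ] H →ₗ[ℝ] ℝ)
    (ha_symm : ∀ x y : H, a x y = a y x)
    (W : Submodule ℝ H) (c : ℝ) (hc : 0 < c)
    (ha_coercive : ∀ v ∈ W, c * ‖v‖ ^ 2 ≤ a v v)
    (k : ℝ) (hk : 0 < k) (N : ℕ) (hN : 1 ≤ N)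
    (y : ℕ → H) (hy_mem : ∀ i, 1 ≤ i → i ≤ N → y i ∈ W)
    (f : ℕ → H)
    (hscheme : ∀ i ∈ Finset.Icc 1 N, ∀ w ∈ W,
      ⟪y i - y (i - 1), w⟫ + k * a (y i) w = k * ⟪f i, w⟫) :
    (∑ i ∈ Finset.Icc 1 N, (‖y i - y (i - 1)‖ ^ 2 + k * a (y i) (y i))) + ‖y N‖ ^ 2 ≤
      ‖y 0‖ ^ 2 + (1 / c) * ∑ i ∈ Finset.Icc 1 N, k * ‖f i‖ ^ 2 :=
  dG0_stability_interior_part_general a W c hc ha_coercive k hk N y hy_mem f hscheme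
end
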